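/- Let d ≥ 1, let p be an admissible triple of exponents, and let η ∈ (0,1). Then for every ε > 0 there exists δ > 0 such that for all f1 ∈ L^{p_1}(ℝ^{2d+1}), f2 ∈ L^{p_2}(ℝ^{2d+1}) with ‖f1‖_{p_1} ≤ δ and ‖f2‖_{p_2} ≤ δ, every 2d×2d real matrix A and every b ∈ ℝ with ‖AᵀJA‖ ≤ δ and |b|·‖AᵀJA‖ ≤ δ, one has |T''(f_{1,♯}, f_{2,♯}, g3)| ≤ ε (‖f1‖_{p_1}² + ‖f2‖_{p_2}² + (1+b²)‖AᵀJA‖²), where f_{j,♯} is formed with parameter η. -/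

import Mathlib

/-!
On the support of `f_♯` one has `|f| ≤ η g ≤ g`, hence `|f_♯| ≤ |f|^{3/4} g^{1/4}`. Together with
`|e^{iθ} - 1| ≤ |θ|` and `|σ(Ax₁, Ax₂)| = |⟨x₁, AᵀJA x₂⟩| ≤ ‖AᵀJA‖ |x₁| |x₂|`, and `|g₃| ≤ 1`, this
bounds `|T''(f₁♯, f₂♯, g₃)|` by `|b| ‖AᵀJA‖` times the product of the integrals
`∫ |f_j|^{3/4} |x| g_j^{1/4}`, and Hölder bounds each of these by `C ‖f_j‖^{3/4}`.
The resulting bound `C |b| ‖AᵀJA‖ (‖f₁‖ ‖f₂‖)^{3/4}` has total degree `5/2 > 2`, so by AM-GM it is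
at most `C δ^{1/2} (‖f₁‖² + ‖f₂‖² + b² ‖AᵀJA‖²)` as soon as `‖f_j‖ ≤ δ`.
-/

open MeasureTheory Filter Matrix
open scoped Real ENNReal BigOperators InnerProductSpace

noncomputable section

namespace Stability

/-- Euclidean space `ℝ^n`. -/
abbrev E (n : ℕ) : Type := EuclideanSpace ℝ (Fin n)

/-- The underlying space `ℝ^{2d} × ℝ` of the Heisenberg group `ℍ^d`. -/
abbrev H (d : ℕ) : Type := E (2 * d) × ℝ

/-- A triple of exponents `p ∈ (1,∞)^3` is admissible if `∑ 1/p_j = 2`. -/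
def IsAdmissible (p : Fin 3 → ℝ) : Prop :=
  (∀ j, 1 < p j) ∧ (∑ j, (p j)⁻¹) = 2

/-- Conjugate exponent `p' = p/(p-1)`. -/
def conjExp (q : ℝ) : ℝ := q / (q - 1)

/-- The sharp Young constant `A_p`. -/
def youngA (p : Fin 3 → ℝ) : ℝ :=
  ∏ j, (p j) ^ (1 / (2 * p j)) / (conjExp (p j)) ^ (1 / (2 * conjExp (p j)))

/-- `γ_j = π p_j'`. -/
def γexp (p : Fin 3 → ℝ) (j : Fin 3) : ℝ := Real.pi * conjExp (p j)

/-- The `L^q` norm (for a real exponent `q`) of a complex-valued function. -/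
def Lnorm {α : Type*} [MeasureSpace α] (q : ℝ) (f : α → ℂ) : ℝ :=
  (∫ z, ‖f z‖ ^ q) ^ (1 / q)

/-- Membership of a triple of functions in `L^p = L^{p_1} × L^{p_2} × L^{p_3}`. -/
def MemLpT {α : Type*} [MeasureSpace α] (p : Fin 3 → ℝ) (f : Fin 3 → α → ℂ) : Prop :=
  ∀ j, MemLp (f j) (ENNReal.ofReal (p j)) volume

/-- Maximum of a triple of reals. -/
def tmax (u : Fin 3 → ℝ) : ℝ := max (u 0) (max (u 1) (u 2))

/-- `‖f‖_p := max_j ‖f_j‖_{p_j}` for a triple of functions. -/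
def tnorm {α : Type*} [MeasureSpace α] (p : Fin 3 → ℝ) (f : Fin 3 → α → ℂ) : ℝ :=
  tmax fun j => Lnorm (p j) (f j)

/-- The real Gaussian `exp(-γ_j |z|²)` on `ℝ^n`. -/
def gaussER (n : ℕ) (p : Fin 3 → ℝ) (j : Fin 3) : E n → ℝ :=
  fun z => Real.exp (-(γexp p j * ‖z‖ ^ 2))

/-- The Gaussian `g_j(z) = exp(-γ_j |z|²)` on `ℝ^n`, as a complex-valued function. -/
def gaussE (n : ℕ) (p : Fin 3 → ℝ) (j : Fin 3) : E n → ℂ :=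
  fun z => Complex.ofReal (gaussER n p j z)

/-- The trilinear form for convolution on `ℝ^n`. -/
def Tconv (n : ℕ) (f : Fin 3 → E n → ℂ) : ℂ :=
  ∫ x : E n, ∫ y : E n, f 0 x * f 1 y * f 2 (-x - y)

/-- Action of a matrix on `ℝ^n`. -/
def mapp {n : ℕ} (M : Matrix (Fin n) (Fin n) ℝ) (x : E n) : E n :=
  Matrix.toEuclideanLin M x

/-- The (Euclidean) operator norm of a matrix. -/
def opNorm {n : ℕ} (M : Matrix (Fin n) (Fin n) ℝ) : ℝ :=
  ‖LinearMap.toContinuousLinearMap (Matrix.toEuclideanLin M)‖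

/-- The standard symplectic form `σ(x,y) = ∑_{j<d} (x_j y_{j+d} - x_{j+d} y_j)` on `ℝ^{2d}`. -/
def symp (d : ℕ) (x y : E (2 * d)) : ℝ :=
  ∑ j : Fin d, (x ⟨j.1, by have := j.2; omega⟩ * y ⟨j.1 + d, by have := j.2; omega⟩
    - x ⟨j.1 + d, by have := j.2; omega⟩ * y ⟨j.1, by have := j.2; omega⟩)

/-- The matrix `J` with `σ(x,y) = x ⬝ (J y)`. -/
def Jmat (d : ℕ) : Matrix (Fin (2 * d)) (Fin (2 * d)) ℝ :=
  Matrix.of fun i k =>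
    if i.1 < d ∧ k.1 = i.1 + d then 1 else if k.1 + d = i.1 then -1 else 0

/-- A symplectic matrix. -/
def IsSymplectic (d : ℕ) (S : Matrix (Fin (2 * d)) (Fin (2 * d)) ℝ) : Prop :=
  ∀ x y : E (2 * d), symp d (mapp S x) (mapp S y) = symp d x y

/-- The Heisenberg group law `(x,t)·(x',t') = (x+x', t+t'+σ(x,x'))`. -/
def hMul (d : ℕ) (z w : H d) : H d := (z.1 + w.1, z.2 + w.2 + symp d z.1 w.1)

/-- Inversion `(x,t)⁻¹ = (-x,-t)` in the Heisenberg group. -/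
def hInv (d : ℕ) (z : H d) : H d := (-z.1, -z.2)

/-- The trilinear form for convolution on the Heisenberg group `ℍ^d`. -/
def THeis (d : ℕ) (f : Fin 3 → H d → ℂ) : ℂ :=
  ∫ z1 : H d, ∫ z2 : H d, f 0 z1 * f 1 z2 * f 2 (hMul d (hInv d z2) (hInv d z1))

/-- The generators of the symmetry group `Σ(T_{ℍ^d})`: scalings, dilations, translations,
the diagonal action of the symplectic group, shear transformations, and modulations in `x`.
Each family of generators is closed under inversion, so the closure of this set under
composition is exactly the group generated by these symmetries. -/
def heisGens (d : ℕ) : Set (Function.End (Fin 3 → H d → ℂ)) :=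
  {Ψ | (∃ a : Fin 3 → ℂ, (∀ j, a j ≠ 0) ∧ Ψ = fun f j z => a j * f j z) ∨
       (∃ r : ℝ, 0 < r ∧ Ψ = fun f j z => f j (r • z.1, r ^ 2 * z.2)) ∨
       (∃ u : Fin 3 → H d, Ψ = fun f j z => f j (hMul d (hMul d (u j) z) (hInv d (u (j + 1))))) ∨
       (∃ S, IsSymplectic d S ∧ Ψ = fun f j z => f j (mapp S z.1, z.2)) ∨
       (∃ φ : E (2 * d) →ₗ[ℝ] ℝ, Ψ = fun f j z => f j (z.1, z.2 + φ z.1)) ∨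
       (∃ u : E (2 * d), Ψ = fun f j z => Complex.exp (Complex.I * Complex.ofReal ⟪u, z.1⟫_ℝ) * f j z)}

/-- The symmetry group `Σ(T_{ℍ^d})` (as a monoid of transformations; since the generating
set is closed under inversion this coincides with the generated group). -/
def heisSym (d : ℕ) : Submonoid (Function.End (Fin 3 → H d → ℂ)) :=
  Submonoid.closure (heisGens d)

/-- The canonical Gaussian `G(x,t) = exp(-|Lx|² - a t² + i b t)` on `ℍ^d`. -/
def canonGauss (d : ℕ) (L : Matrix (Fin (2 * d)) (Fin (2 * d)) ℝ) (a b : ℝ) : H d → ℂ :=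
  fun z => Complex.exp (Complex.ofReal (-(‖mapp L z.1‖ ^ 2) - a * z.2 ^ 2) +
    Complex.I * Complex.ofReal (b * z.2))

/-- The parameters `(L,a,b)` define a canonical `ε`-diffuse Gaussian. -/
def IsCanonDiffuse (d : ℕ) (ε : ℝ) (L : Matrix (Fin (2 * d)) (Fin (2 * d)) ℝ)
    (a b : ℝ) : Prop :=
  0 < a ∧ IsUnit L.det ∧ max (max a (Real.sqrt a)) b * opNorm L⁻¹ < ε

/-- `G` is an `ε`-diffuse, `p`-compatible ordered triple of Gaussians: `G = Ψ G̃` for a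
symmetry `Ψ ∈ Σ(T_{ℍ^d})` and a `p`-compatible triple `G̃` of canonical `ε`-diffuse
Gaussians, i.e. `G̃_j = exp(-|L_j x|² - a_j t² + i b_j t)` with `L_j = γ_j^{1/2} L`,
`a_j = γ_j a`, `b_j = b`. -/
def IsCompatibleDiffuse (d : ℕ) (p : Fin 3 → ℝ) (ε : ℝ) (G : Fin 3 → H d → ℂ) : Prop :=
  ∃ Ψ ∈ heisSym d, ∃ L : Matrix (Fin (2 * d)) (Fin (2 * d)) ℝ, ∃ a b : ℝ,
    (∀ j, IsCanonDiffuse d ε (Real.sqrt (γexp p j) • L) (γexp p j * a) b) ∧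
    G = Ψ (fun j => canonGauss d (Real.sqrt (γexp p j) • L) (γexp p j * a) b)

/-- The real Gaussian `exp(-γ_j(|x|²+t²))` on `ℝ^{2d} × ℝ`. -/
def gaussHR (d : ℕ) (p : Fin 3 → ℝ) (j : Fin 3) : H d → ℝ :=
  fun z => Real.exp (-(γexp p j * (‖z.1‖ ^ 2 + z.2 ^ 2)))

/-- The Gaussian `g_j(x,t) = exp(-γ_j(|x|²+t²))` on `ℝ^{2d} × ℝ`, complex-valued. -/
def gaussH (d : ℕ) (p : Fin 3 → ℝ) (j : Fin 3) : H d → ℂ :=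
  fun z => Complex.ofReal (gaussHR d p j z)

/-- The generalized trilinear form `T(f,A,b)`. -/
def Tgen (d : ℕ) (f : Fin 3 → H d → ℂ) (A : Matrix (Fin (2 * d)) (Fin (2 * d)) ℝ)
    (b : ℝ) : ℂ :=
  ∫ z1 : H d, ∫ z2 : H d,
    f 0 z1 * f 1 z2 *
      f 2 (-(z1.1 + z2.1), -(z1.2 + z2.2 + symp d (mapp A z1.1) (mapp A z2.1))) *
      Complex.exp (Complex.I * Complex.ofReal (b * symp d (mapp A z1.1) (mapp A z2.1)))

/-- The group law `(x,t)·_A(x',t') = (x+x', t+t'+σ(Ax,Ax'))`. -/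
def hMulA (d : ℕ) (A : Matrix (Fin (2 * d)) (Fin (2 * d)) ℝ) (z w : H d) : H d :=
  (z.1 + w.1, z.2 + w.2 + symp d (mapp A z.1) (mapp A w.1))

/-- The state space on which the symmetries of `T(f,A,b)` act: a triple of functions
together with the attached parameters `(A,b)`. -/
abbrev X (d : ℕ) : Type :=
  (Fin 3 → H d → ℂ) × Matrix (Fin (2 * d)) (Fin (2 * d)) ℝ × ℝ

/-- The generators of `𝔊₀`: the diagonal `GL(2d)` action and modulation in the last
coordinate. Each family is closed under inversion. -/
def G0gens (d : ℕ) : Set (Function.End (X d)) :=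
  {Ψ | (∃ L : Matrix (Fin (2 * d)) (Fin (2 * d)) ℝ, IsUnit L.det ∧
          Ψ = fun s => (fun j z => s.1 j (mapp L z.1, z.2), s.2.1 * L, s.2.2)) ∨
       (∃ ξ : ℝ,
          Ψ = fun s => (fun j z => Complex.exp (Complex.I * Complex.ofReal (ξ * z.2)) * s.1 j z,
            s.2.1, s.2.2 + ξ))}

/-- The group `𝔊₀` (as a monoid of transformations; the generating set is closed under
inversion so this coincides with the generated group). -/
def G0 (d : ℕ) : Submonoid (Function.End (X d)) := Submonoid.closure (G0gens d)

/-- The generators of `𝔊₁`: scalings, dilations, translation–modulation symmetries,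
the diagonal symplectic action, shears, and modulations in `x`. -/
def G1gens (d : ℕ) : Set (Function.End (X d)) :=
  {Ψ | (∃ a : Fin 3 → ℂ, (∀ j, a j ≠ 0) ∧
          Ψ = fun s => (fun j z => a j * s.1 j z, s.2.1, s.2.2)) ∨
       (∃ r : ℝ, 0 < r ∧
          Ψ = fun s => (fun j z => s.1 j (r • z.1, r ^ 2 * z.2), s.2.1, r ^ 2 * s.2.2)) ∨
       (∃ U : Fin 3 → H d,
          Ψ = fun s => (fun j z =>
            (if j = 0 then
                Complex.exp (Complex.I * Complex.ofReal
                  ⟪(-(s.2.2)) • mapp ((s.2.1)ᵀ * Jmat d * s.2.1) ((U 1).1 - (U 2).1), z.1⟫_ℝ)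
             else if j = 1 then
                Complex.exp (Complex.I * Complex.ofReal
                  ⟪(-(s.2.2)) • mapp (((s.2.1)ᵀ * Jmat d * s.2.1)ᵀ) ((U 0).1 - (U 1).1), z.1⟫_ℝ)
             else 1) *
            s.1 j (hMulA d s.2.1 (hMulA d s.2.1 (U j) z) (hInv d (U (j + 1)))),
           s.2.1, s.2.2)) ∨
       (∃ S, IsSymplectic d S ∧
          Ψ = fun s => (fun j z => s.1 j (mapp S z.1, z.2), s.2.1, s.2.2)) ∨
       (∃ φ : E (2 * d) →ₗ[ℝ] ℝ,
          Ψ = fun s => (fun j z => s.1 j (z.1, z.2 + φ z.1), s.2.1, s.2.2)) ∨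
       (∃ u : E (2 * d),
          Ψ = fun s => (fun j z => Complex.exp (Complex.I * Complex.ofReal ⟪u, z.1⟫_ℝ) * s.1 j z,
            s.2.1, s.2.2))}

/-- The group `𝔊₁` (as a monoid of transformations; the generating set is closed under
inversion so this coincides with the generated group). -/
def G1 (d : ℕ) : Submonoid (Function.End (X d)) := Submonoid.closure (G1gens d)

/-- The orbit `Õ(f,A,b)`: all `Ψ₀ Ψ₁ ((e^{-ibt} f) ∘ A⁻¹, Id, 0)` with `Ψ₀ ∈ 𝔊₀`,
`Ψ₁ ∈ 𝔊₁`. -/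
def tildeO (d : ℕ) (f : Fin 3 → H d → ℂ) (A : Matrix (Fin (2 * d)) (Fin (2 * d)) ℝ)
    (b : ℝ) : Set (X d) :=
  {y | ∃ Ψ₀ ∈ G0 d, ∃ Ψ₁ ∈ G1 d,
    y = Ψ₀ (Ψ₁ (fun j z => Complex.exp (-(Complex.I * Complex.ofReal (b * z.2))) *
          f j (mapp A⁻¹ z.1, z.2), 1, 0))}

/-- The squared distance `dist_p(Õ(f,A,b),(g,0,0))²`. -/
def distSq (d : ℕ) (p : Fin 3 → ℝ) (f : Fin 3 → H d → ℂ)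
    (A : Matrix (Fin (2 * d)) (Fin (2 * d)) ℝ) (b : ℝ) : ℝ :=
  sInf ((fun y => (tmax fun j => Lnorm (p j) (y.1 j - gaussH d p j)) ^ 2
      + opNorm ((y.2.1)ᵀ * Jmat d * y.2.1) ^ 2
      + y.2.2 ^ 2 * opNorm ((y.2.1)ᵀ * Jmat d * y.2.1) ^ 2) '' tildeO d f A b)

/-- The group–structure difference form `T'`. -/
def T'op (d : ℕ) (A : Matrix (Fin (2 * d)) (Fin (2 * d)) ℝ) (h : Fin 3 → H d → ℂ) : ℂ :=
  ∫ z1 : H d, ∫ z2 : H d, h 0 z1 * h 1 z2 *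
    (h 2 (-(z1.1 + z2.1), -(z1.2 + z2.2 + symp d (mapp A z1.1) (mapp A z2.1)))
      - h 2 (-(z1.1 + z2.1), -(z1.2 + z2.2)))

/-- The twisting–factor difference form `T''`. -/
def T''op (d : ℕ) (A : Matrix (Fin (2 * d)) (Fin (2 * d)) ℝ) (b : ℝ)
    (h : Fin 3 → H d → ℂ) : ℂ :=
  ∫ z1 : H d, ∫ z2 : H d, h 0 z1 * h 1 z2 *
    h 2 (-(z1.1 + z2.1), -(z1.2 + z2.2 + symp d (mapp A z1.1) (mapp A z2.1))) *
    (Complex.exp (Complex.I * Complex.ofReal (b * symp d (mapp A z1.1) (mapp A z2.1))) - 1)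

/-- The part `f_♯` of `f`: `f_♯(z) = f(z)` when `|f(z)| ≤ η g(z)`, else `0`. -/
def fSharp {α : Type*} (η : ℝ) (gR : α → ℝ) (f : α → ℂ) : α → ℂ :=
  fun z => if ‖f z‖ ≤ η * gR z then f z else 0

/-- The part `f_♭ = f - f_♯`. -/
def fFlat {α : Type*} (η : ℝ) (gR : α → ℝ) (f : α → ℂ) : α → ℂ :=
  fun z => f z - fSharp η gR f z

/-- The generators of the symmetry group of convolution on `ℝ^n`: scalings, translations
(with `v₁+v₂+v₃ = 0`), common modulations, and the diagonal `GL(n)` action. Each family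
is closed under inversion. -/
def euclGens (n : ℕ) : Set (Function.End (Fin 3 → E n → ℂ)) :=
  {Ψ | (∃ a : Fin 3 → ℂ, (∀ j, a j ≠ 0) ∧ Ψ = fun f j x => a j * f j x) ∨
       (∃ v : Fin 3 → E n, v 0 + v 1 + v 2 = 0 ∧ Ψ = fun f j x => f j (x + v j)) ∨
       (∃ ξ : E n, Ψ = fun f j x => Complex.exp (Complex.I * Complex.ofReal ⟪ξ, x⟫_ℝ) * f j x) ∨
       (∃ L : Matrix (Fin n) (Fin n) ℝ, IsUnit L.det ∧ Ψ = fun f j x => f j (mapp L x))}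

/-- The symmetry group of Euclidean convolution (as a monoid of transformations; the
generating set is closed under inversion so this coincides with the generated group). -/
def euclSym (n : ℕ) : Submonoid (Function.End (Fin 3 → E n → ℂ)) :=
  Submonoid.closure (euclGens n)

/-- The orbit `O(f)` of a triple under the symmetries of Euclidean convolution. -/
def euclOrbit (n : ℕ) (f : Fin 3 → E n → ℂ) : Set (Fin 3 → E n → ℂ) :=
  {h | ∃ Ψ ∈ euclSym n, h = Ψ f}

/-- `dist_p(O(f), g) = inf_{h ∈ O(f)} max_j ‖h_j - g_j‖_{p_j}`. -/
def euclDist (n : ℕ) (p : Fin 3 → ℝ) (f : Fin 3 → E n → ℂ) : ℝ :=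
  sInf ((fun h => tmax fun j => Lnorm (p j) (h j - gaussE n p j)) '' euclOrbit n f)

/-- `P` is the family of normalized orthogonal polynomials `P_n^{(t)}`: for `t > 0`,
`P_n^{(t)}` has degree `n`, positive leading coefficient, `‖P_n^{(t)} e^{-tπx²}‖_{L²} = 1`
and `P_n^{(t)} e^{-tπx²} ⊥ P_k^{(t)} e^{-tπx²}` for `k < n`. -/
def IsHermiteFamily (P : ℝ → ℕ → Polynomial ℝ) : Prop :=
  ∀ t : ℝ, 0 < t → ∀ n : ℕ,
    (P t n).degree = n ∧ 0 < (P t n).leadingCoeff ∧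
    (∫ x : ℝ, ((P t n).eval x) ^ 2 * Real.exp (-(2 * t * Real.pi * x ^ 2))) = 1 ∧
    ∀ k : ℕ, k < n →
      (∫ x : ℝ, (P t n).eval x * (P t k).eval x * Real.exp (-(2 * t * Real.pi * x ^ 2))) = 0

/-- `τ_j = p_j p_j' / 2`. -/
def τexp (p : Fin 3 → ℝ) (j : Fin 3) : ℝ := p j * conjExp (p j) / 2

/-- `⟨Re f_j, P_α^{(τ_j)} g_j^{p_j-1}⟩` on `ℝ^{2d+1}`. -/
def pairReE (d : ℕ) (p : Fin 3 → ℝ) (P : ℝ → ℕ → Polynomial ℝ)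
    (f : Fin 3 → E (2 * d + 1) → ℂ) (j : Fin 3) (α : Fin (2 * d + 1) → ℕ) : ℝ :=
  ∫ z : E (2 * d + 1), (f j z).re * (∏ k, (P (τexp p j) (α k)).eval (z k)) *
    (gaussER (2 * d + 1) p j z) ^ (p j - 1)

/-- `⟨Im f_j, P_α^{(τ_j)} g_j^{p_j-1}⟩` on `ℝ^{2d+1}`. -/
def pairImE (d : ℕ) (p : Fin 3 → ℝ) (P : ℝ → ℕ → Polynomial ℝ)
    (f : Fin 3 → E (2 * d + 1) → ℂ) (j : Fin 3) (α : Fin (2 * d + 1) → ℕ) : ℝ :=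
  ∫ z : E (2 * d + 1), (f j z).im * (∏ k, (P (τexp p j) (α k)).eval (z k)) *
    (gaussER (2 * d + 1) p j z) ^ (p j - 1)

/-- The orthogonality conditions of the sharpened Young inequality, on `ℝ^{2d+1}`. -/
def OrthCondsE (d : ℕ) (p : Fin 3 → ℝ) (P : ℝ → ℕ → Polynomial ℝ)
    (f : Fin 3 → E (2 * d + 1) → ℂ) : Prop :=
  (∀ j, pairReE d p P f j 0 = 0 ∧ pairImE d p P f j 0 = 0) ∧
  (∀ α : Fin (2 * d + 1) → ℕ, (∑ k, α k) = 1 →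
      pairReE d p P f 0 α = 0 ∧ pairReE d p P f 1 α = 0 ∧ pairImE d p P f 2 α = 0) ∧
  (∀ α : Fin (2 * d + 1) → ℕ, (∑ k, α k) = 2 → pairReE d p P f 2 α = 0)

/-- The `k`-th coordinate of a point of `ℝ^{2d} × ℝ`, viewed as a point of `ℝ^{2d+1}`. -/
def coordH (d : ℕ) (z : H d) (k : Fin (2 * d + 1)) : ℝ :=
  if h : (k : ℕ) < 2 * d then z.1 ⟨k, h⟩ else z.2

/-- `⟨Re f_j, P_α^{(τ_j)} g_j^{p_j-1}⟩` on `ℝ^{2d} × ℝ ≅ ℝ^{2d+1}`. -/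
def pairReH (d : ℕ) (p : Fin 3 → ℝ) (P : ℝ → ℕ → Polynomial ℝ)
    (f : Fin 3 → H d → ℂ) (j : Fin 3) (α : Fin (2 * d + 1) → ℕ) : ℝ :=
  ∫ z : H d, (f j z).re * (∏ k, (P (τexp p j) (α k)).eval (coordH d z k)) *
    (gaussHR d p j z) ^ (p j - 1)

/-- `⟨Im f_j, P_α^{(τ_j)} g_j^{p_j-1}⟩` on `ℝ^{2d} × ℝ ≅ ℝ^{2d+1}`. -/
def pairImH (d : ℕ) (p : Fin 3 → ℝ) (P : ℝ → ℕ → Polynomial ℝ)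
    (f : Fin 3 → H d → ℂ) (j : Fin 3) (α : Fin (2 * d + 1) → ℕ) : ℝ :=
  ∫ z : H d, (f j z).im * (∏ k, (P (τexp p j) (α k)).eval (coordH d z k)) *
    (gaussHR d p j z) ^ (p j - 1)

/-- The orthogonality conditions, on `ℝ^{2d} × ℝ ≅ ℝ^{2d+1}`. -/
def OrthCondsH (d : ℕ) (p : Fin 3 → ℝ) (P : ℝ → ℕ → Polynomial ℝ)
    (f : Fin 3 → H d → ℂ) : Prop :=
  (∀ j, pairReH d p P f j 0 = 0 ∧ pairImH d p P f j 0 = 0) ∧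
  (∀ α : Fin (2 * d + 1) → ℕ, (∑ k, α k) = 1 →
      pairReH d p P f 0 α = 0 ∧ pairReH d p P f 1 α = 0 ∧ pairImH d p P f 2 α = 0) ∧
  (∀ α : Fin (2 * d + 1) → ℕ, (∑ k, α k) = 2 → pairReH d p P f 2 α = 0)

section Symplectic

lemma mapp_apply {n : ℕ} (M : Matrix (Fin n) (Fin n) ℝ) (v : E n) (i : Fin n) :
    mapp M v i = ∑ k, M i k * v k := by
  simp [mapp, Matrix.toLpLin_apply, Matrix.mulVec, dotProduct]

lemma mapp_mapp {n : ℕ} (M N : Matrix (Fin n) (Fin n) ℝ) (v : E n) :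
    mapp M (mapp N v) = mapp (M * N) v := by
  simp [mapp, Matrix.toLpLin_apply, Matrix.mulVec_mulVec]

lemma inner_mapp_left {n : ℕ} (M : Matrix (Fin n) (Fin n) ℝ) (u v : E n) :
    ⟪mapp M u, v⟫_ℝ = ⟪u, mapp Mᵀ v⟫_ℝ := by
  rw [mapp, mapp, ← Matrix.conjTranspose_eq_transpose_of_trivial,
    Matrix.toEuclideanLin_conjTranspose_eq_adjoint, LinearMap.adjoint_inner_right]

lemma opNorm_nonneg {n : ℕ} (M : Matrix (Fin n) (Fin n) ℝ) : 0 ≤ opNorm M :=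
  norm_nonneg _

lemma norm_mapp_le {n : ℕ} (M : Matrix (Fin n) (Fin n) ℝ) (v : E n) :
    ‖mapp M v‖ ≤ opNorm M * ‖v‖ :=
  (LinearMap.toContinuousLinearMap (Matrix.toEuclideanLin M)).le_opNorm v

lemma Fin.sum_univ_two_mul {M : Type*} [AddCommMonoid M] (d : ℕ) (F : Fin (2 * d) → M) :
    ∑ i, F i = ∑ j : Fin d, (F ⟨j, by omega⟩ + F ⟨j + d, by omega⟩) := by
  rw [← Fintype.sum_equiv (finCongr (two_mul d)).symm _ _ (fun _ => rfl), Fin.sum_univ_add,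
    ← Finset.sum_add_distrib]
  exact Finset.sum_congr rfl fun j _ => by congr 2; ext; simp [add_comm]

lemma mapp_Jmat_apply_left (d : ℕ) (y : E (2 * d)) (j : Fin d) :
    mapp (Jmat d) y ⟨j, by omega⟩ = y ⟨j + d, by omega⟩ := by
  rw [mapp_apply, Finset.sum_eq_single ⟨j + d, by omega⟩]
  · simp [Jmat]
  · intro k _ hk
    have hk' : (k : ℕ) ≠ j + d := fun h => hk (Fin.ext h)
    simp [Jmat, hk']
    omega
  · simp

lemma mapp_Jmat_apply_right (d : ℕ) (y : E (2 * d)) (j : Fin d) :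
    mapp (Jmat d) y ⟨j + d, by omega⟩ = -y ⟨j, by omega⟩ := by
  rw [mapp_apply, Finset.sum_eq_single ⟨j, by omega⟩]
  · simp [Jmat]
  · intro k _ hk
    have hk' : (k : ℕ) ≠ j := fun h => hk (Fin.ext h)
    simp [Jmat, hk']
  · simp

lemma symp_eq_inner_mapp_Jmat (d : ℕ) (x y : E (2 * d)) :
    symp d x y = ⟪x, mapp (Jmat d) y⟫_ℝ := by
  simp only [PiLp.inner_apply, RCLike.inner_apply, conj_trivial, Fin.sum_univ_two_mul,
    mapp_Jmat_apply_left, mapp_Jmat_apply_right, symp]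
  exact Finset.sum_congr rfl fun j _ => by ring

lemma symp_mapp_mapp (d : ℕ) (A : Matrix (Fin (2 * d)) (Fin (2 * d)) ℝ) (x y : E (2 * d)) :
    symp d (mapp A x) (mapp A y) = ⟪x, mapp (Aᵀ * Jmat d * A) y⟫_ℝ := by
  rw [symp_eq_inner_mapp_Jmat, inner_mapp_left, mapp_mapp, mapp_mapp, Matrix.mul_assoc]

lemma abs_symp_mapp_mapp_le (d : ℕ) (A : Matrix (Fin (2 * d)) (Fin (2 * d)) ℝ)
    (x y : E (2 * d)) :
    |symp d (mapp A x) (mapp A y)| ≤ opNorm (Aᵀ * Jmat d * A) * (‖x‖ * ‖y‖) := by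
  rw [symp_mapp_mapp]
  calc _ ≤ ‖x‖ * ‖mapp (Aᵀ * Jmat d * A) y‖ := abs_real_inner_le_norm _ _
    _ ≤ ‖x‖ * (opNorm (Aᵀ * Jmat d * A) * ‖y‖) := by gcongr; exact norm_mapp_le _ _
    _ = _ := by ring

end Symplectic

section Gaussian

def heisGauss (d : ℕ) (c : ℝ) (z : H d) : ℝ := Real.exp (-(c * (‖z.1‖ ^ 2 + z.2 ^ 2)))

def heisWeight (d : ℕ) (c : ℝ) (z : H d) : ℝ := ‖z.1‖ * heisGauss d c z

variable {d : ℕ} {c : ℝ}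

lemma heisGauss_rpow (c q : ℝ) (z : H d) : heisGauss d c z ^ q = heisGauss d (c * q) z := by
  rw [heisGauss, heisGauss, ← Real.exp_mul]
  ring_nf

lemma heisGauss_pos (c : ℝ) (z : H d) : 0 < heisGauss d c z := Real.exp_pos _

@[fun_prop]
lemma continuous_heisGauss (d : ℕ) (c : ℝ) : Continuous (heisGauss d c) := by
  unfold heisGauss; fun_prop

lemma integrable_heisGauss (d : ℕ) (hc : 0 < c) : Integrable (heisGauss d c) := by
  have hx : Integrable fun x : E (2 * d) => Real.exp (-(c * ‖x‖ ^ 2)) := by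
    refine (GaussianFourier.integrable_cexp_neg_mul_sq_norm_add (V := E (2 * d)) (b := c)
      (by simpa using hc) 0 0).norm.congr (ae_of_all _ fun x => ?_)
    simp [Complex.norm_exp, ← Complex.ofReal_pow]
  have ht : Integrable fun t : ℝ => Real.exp (-(c * t ^ 2)) := by
    simpa only [neg_mul] using integrable_exp_neg_mul_sq hc
  rw [Measure.volume_eq_prod]
  refine (hx.mul_prod ht).congr (ae_of_all _ fun z => ?_)
  simp only [heisGauss, ← Real.exp_add]
  ring_nf

lemma memLp_heisGauss (d : ℕ) (hc : 0 < c) {q : ℝ} (hq : 0 < q) :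
    MemLp (heisGauss d c) (ENNReal.ofReal q) := by
  rw [← integrable_norm_rpow_iff (continuous_heisGauss d c).aestronglyMeasurable
    (by simpa using hq) ENNReal.ofReal_ne_top, ENNReal.toReal_ofReal hq.le]
  refine (integrable_heisGauss d (mul_pos hc hq)).congr (ae_of_all _ fun z => ?_)
  dsimp only
  rw [Real.norm_of_nonneg (heisGauss_pos c z).le, heisGauss_rpow]

lemma heisWeight_nonneg (c : ℝ) (z : H d) : 0 ≤ heisWeight d c z :=
  mul_nonneg (norm_nonneg _) (heisGauss_pos c z).le

lemma le_exp_inv_four_mul_add_mul_sq {a : ℝ} (ha : 0 < a) (u : ℝ) :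
    u ≤ Real.exp (1 / (4 * a) + a * u ^ 2) := by
  have h : u ≤ 1 / (4 * a) + a * u ^ 2 := by
    rw [div_add' _ _ _ (by positivity), le_div_iff₀ (by positivity)]
    nlinarith [sq_nonneg (2 * a * u - 1)]
  linarith [Real.add_one_le_exp (1 / (4 * a) + a * u ^ 2)]

lemma heisWeight_le (hc : 0 < c) (z : H d) :
    heisWeight d c z ≤ Real.exp (1 / (2 * c)) * heisGauss d (c / 2) z := by
  have h := le_exp_inv_four_mul_add_mul_sq (half_pos hc) ‖z.1‖
  calc heisWeight d c z
      ≤ Real.exp (1 / (4 * (c / 2)) + c / 2 * ‖z.1‖ ^ 2) * heisGauss d c z :=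
        mul_le_mul_of_nonneg_right h (Real.exp_pos _).le
    _ ≤ Real.exp (1 / (2 * c)) * heisGauss d (c / 2) z := by
        rw [heisGauss, heisGauss, ← Real.exp_add, ← Real.exp_add, Real.exp_le_exp,
          show 1 / (4 * (c / 2)) = 1 / (2 * c) by ring]
        nlinarith [mul_nonneg hc.le (sq_nonneg z.2)]

lemma memLp_heisWeight (d : ℕ) (hc : 0 < c) {q : ℝ} (hq : 0 < q) :
    MemLp (heisWeight d c) (ENNReal.ofReal q) := by
  refine ((memLp_heisGauss d (half_pos hc) hq).const_mul (Real.exp (1 / (2 * c)))).of_le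
    (by unfold heisWeight; fun_prop) (ae_of_all _ fun z => ?_)
  rw [Real.norm_of_nonneg (heisWeight_nonneg c z),
    Real.norm_of_nonneg (mul_pos (Real.exp_pos _) (heisGauss_pos _ z)).le]
  exact heisWeight_le hc z

end Gaussian

section Holder

variable {α : Type*} [MeasureSpace α] {f : α → ℂ} {w : α → ℝ} {p θ s : ℝ}

lemma Lnorm_nonneg (q : ℝ) (f : α → ℂ) : 0 ≤ Lnorm q f :=
  Real.rpow_nonneg (integral_nonneg fun _ => Real.rpow_nonneg (norm_nonneg _) _) _

lemma memLp_norm_rpow (hθ : 0 < θ) (hf : MemLp f (ENNReal.ofReal p)) :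
    MemLp (fun z => ‖f z‖ ^ θ) (ENNReal.ofReal (p / θ)) := by
  simpa [ENNReal.toReal_ofReal hθ.le, ENNReal.ofReal_div_of_pos hθ]
    using hf.norm_rpow_div (ENNReal.ofReal θ)

lemma integrable_norm_rpow_mul (hθ : 0 < θ) (hs : (p / θ).HolderConjugate s)
    (hf : MemLp f (ENNReal.ofReal p)) (hw : MemLp w (ENNReal.ofReal s)) :
    Integrable fun z => ‖f z‖ ^ θ * w z := by
  have : ENNReal.HolderTriple (ENNReal.ofReal (p / θ)) (ENNReal.ofReal s) 1 :=
    ⟨by simpa using hs.inv_add_inv_ennreal⟩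
  exact (memLp_norm_rpow hθ hf).integrable_mul hw

lemma integral_norm_rpow_mul_le (hθ : 0 < θ) (hs : (p / θ).HolderConjugate s)
    (hf : MemLp f (ENNReal.ofReal p)) (hw0 : ∀ z, 0 ≤ w z) (hw : MemLp w (ENNReal.ofReal s)) :
    ∫ z, ‖f z‖ ^ θ * w z ≤ Lnorm p f ^ θ * (∫ z, w z ^ s) ^ (1 / s) := by
  refine (integral_mul_le_Lp_mul_Lq_of_nonneg hs
    (ae_of_all _ fun z => Real.rpow_nonneg (norm_nonneg _) _) (ae_of_all _ hw0)
    (memLp_norm_rpow hθ hf) hw).trans_eq ?_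
  simp_rw [← Real.rpow_mul (norm_nonneg _), mul_div_cancel₀ p hθ.ne', Lnorm,
    ← Real.rpow_mul (integral_nonneg fun _ => Real.rpow_nonneg (norm_nonneg _) _)]
  congr 2
  field_simp

end Holder

lemma norm_fSharp_le {α : Type*} {η θ : ℝ} (hη : η ≤ 1) (hθ : θ ≤ 1) {g : α → ℝ} (f : α → ℂ)
    {z : α} (hg : 0 ≤ g z) :
    ‖fSharp η g f z‖ ≤ ‖f z‖ ^ θ * g z ^ (1 - θ) := by
  unfold fSharp
  split_ifs with h
  · calc ‖f z‖ = ‖f z‖ ^ θ * ‖f z‖ ^ (1 - θ) := by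
          rw [← Real.rpow_add' (norm_nonneg _) (by norm_num), add_sub_cancel, Real.rpow_one]
      _ ≤ ‖f z‖ ^ θ * g z ^ (1 - θ) := by
          gcongr
          nlinarith [mul_nonneg (sub_nonneg.2 hη) hg]
  · rw [norm_zero]
    positivity

lemma norm_integral_integral_le_mul {α β G : Type*} [MeasurableSpace α] [MeasurableSpace β]
    [NormedAddCommGroup G] [NormedSpace ℝ G] {μ : Measure α} {ν : Measure β}
    {F : α → β → G} {φ : α → ℝ} {ψ : β → ℝ} {c : ℝ} (hφ : Integrable φ μ) (hψ : Integrable ψ ν)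
    (hF : ∀ x y, ‖F x y‖ ≤ c * φ x * ψ y) :
    ‖∫ x, ∫ y, F x y ∂ν ∂μ‖ ≤ c * (∫ x, φ x ∂μ) * ∫ y, ψ y ∂ν := by
  have hinner (x : α) : ‖∫ y, F x y ∂ν‖ ≤ c * φ x * ∫ y, ψ y ∂ν := by
    rw [← integral_const_mul]
    exact norm_integral_le_of_norm_le (hψ.const_mul _) (ae_of_all _ (hF x))
  rw [mul_assoc, mul_comm (∫ x, φ x ∂μ), ← mul_assoc, ← integral_const_mul]
  refine norm_integral_le_of_norm_le (hφ.const_mul _) (ae_of_all _ fun x => ?_)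
  exact (hinner x).trans_eq (by ring)

lemma mul_rpow_three_quarters_le {κ a₁ a₂ : ℝ} (t : ℝ) (hκ : 0 ≤ κ) (ha₁ : 0 ≤ a₁) (ha₂ : 0 ≤ a₂)
    (h₁ : a₁ ≤ κ ^ 2) (h₂ : a₂ ≤ κ ^ 2) :
    t * (a₁ * a₂) ^ (3 / 4 : ℝ) ≤ κ * (a₁ ^ 2 + a₂ ^ 2 + t ^ 2) := by
  set u := (a₁ * a₂) ^ (1 / 4 : ℝ)
  have hu : 0 ≤ u := Real.rpow_nonneg (mul_nonneg ha₁ ha₂) _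
  have hu4 : u ^ 4 = a₁ * a₂ := by
    rw [← Real.rpow_natCast, ← Real.rpow_mul (mul_nonneg ha₁ ha₂)]; norm_num
  have hu3 : (a₁ * a₂) ^ (3 / 4 : ℝ) = u ^ 3 := by
    rw [← Real.rpow_natCast, ← Real.rpow_mul (mul_nonneg ha₁ ha₂)]; norm_num
  have huκ : u ≤ κ := by
    refine (pow_le_pow_iff_left₀ hu hκ (by norm_num : (4 : ℕ) ≠ 0)).mp ?_
    rw [hu4]
    calc a₁ * a₂ ≤ κ ^ 2 * κ ^ 2 := mul_le_mul h₁ h₂ ha₂ (sq_nonneg κ)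
      _ = κ ^ 4 := by ring
  have hamgm : 2 * (t * u ^ 2) ≤ t ^ 2 + u ^ 4 := by nlinarith [sq_nonneg (t - u ^ 2)]
  rw [hu3]
  calc t * u ^ 3 = u * (t * u ^ 2) := by ring
    _ ≤ κ * (t ^ 2 + a₁ * a₂) := by nlinarith [sq_nonneg t, mul_nonneg ha₁ ha₂]
    _ ≤ κ * (a₁ ^ 2 + a₂ ^ 2 + t ^ 2) := by nlinarith [sq_nonneg (a₁ - a₂)]

lemma γexp_pos {p : Fin 3 → ℝ} {j : Fin 3} (hp : 1 < p j) : 0 < γexp p j :=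
  mul_pos Real.pi_pos (div_pos (by linarith) (by linarith))

lemma norm_gaussH_le_one {d : ℕ} {p : Fin 3 → ℝ} {j : Fin 3} (hγ : 0 ≤ γexp p j) (z : H d) :
    ‖gaussH d p j z‖ ≤ 1 := by
  rw [gaussH, Complex.norm_real, gaussHR, Real.norm_of_nonneg (Real.exp_pos _).le,
    Real.exp_le_one_iff, neg_nonpos]
  positivity

lemma norm_fSharp_gaussHR_le {d : ℕ} {p : Fin 3 → ℝ} {η : ℝ} (hη : η ≤ 1) (j : Fin 3)
    (f : H d → ℂ) (z : H d) :
    ‖fSharp η (gaussHR d p j) f z‖ ≤ ‖f z‖ ^ (3 / 4 : ℝ) * heisGauss d (γexp p j / 4) z := by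
  -- `gaussHR d p j` unfolds to `heisGauss d (γexp p j)`.
  refine (norm_fSharp_le (θ := 3 / 4) hη (by norm_num) f (heisGauss_pos _ z).le).trans_eq ?_
  rw [heisGauss_rpow]
  norm_num [div_eq_mul_inv]

lemma norm_T''_integrand_le {d : ℕ} {p : Fin 3 → ℝ} (hγ : 0 ≤ γexp p 2) {η : ℝ} (hη : η ≤ 1)
    (f₁ f₂ : H d → ℂ) (A : Matrix (Fin (2 * d)) (Fin (2 * d)) ℝ) (b : ℝ) (z₁ z₂ : H d) :
    ‖fSharp η (gaussHR d p 0) f₁ z₁ * fSharp η (gaussHR d p 1) f₂ z₂ *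
        gaussH d p 2 (-(z₁.1 + z₂.1), -(z₁.2 + z₂.2 + symp d (mapp A z₁.1) (mapp A z₂.1))) *
        (Complex.exp (Complex.I * Complex.ofReal (b * symp d (mapp A z₁.1) (mapp A z₂.1))) - 1)‖ ≤
      |b| * opNorm (Aᵀ * Jmat d * A) *
        (‖f₁ z₁‖ ^ (3 / 4 : ℝ) * heisWeight d (γexp p 0 / 4) z₁) *
        (‖f₂ z₂‖ ^ (3 / 4 : ℝ) * heisWeight d (γexp p 1 / 4) z₂) := by
  have htwist : ‖Complex.exp (Complex.I * Complex.ofReal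
      (b * symp d (mapp A z₁.1) (mapp A z₂.1))) - 1‖ ≤
        |b| * (opNorm (Aᵀ * Jmat d * A) * (‖z₁.1‖ * ‖z₂.1‖)) := by
    refine Real.norm_exp_I_mul_ofReal_sub_one_le.trans ?_
    rw [Real.norm_eq_abs, abs_mul]
    exact mul_le_mul_of_nonneg_left (abs_symp_mapp_mapp_le d A _ _) (abs_nonneg b)
  have hg₀ := (heisGauss_pos (γexp p 0 / 4) z₁).le
  have hg₁ := (heisGauss_pos (γexp p 1 / 4) z₂).le
  rw [norm_mul, norm_mul, norm_mul]
  calc _ ≤ (‖f₁ z₁‖ ^ (3 / 4 : ℝ) * heisGauss d (γexp p 0 / 4) z₁) *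
        (‖f₂ z₂‖ ^ (3 / 4 : ℝ) * heisGauss d (γexp p 1 / 4) z₂) * 1 *
        (|b| * (opNorm (Aᵀ * Jmat d * A) * (‖z₁.1‖ * ‖z₂.1‖))) := by
        gcongr
        · exact norm_fSharp_gaussHR_le hη 0 f₁ z₁
        · exact norm_fSharp_gaussHR_le hη 1 f₂ z₂
        · exact norm_gaussH_le_one hγ _
    _ = _ := by unfold heisWeight; ring

lemma exists_integral_norm_rpow_mul_heisWeight_le (d : ℕ) {q θ c : ℝ} (hθ : 0 < θ) (hθq : θ < q)
    (hc : 0 < c) :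
    ∃ K, 0 ≤ K ∧ ∀ f : H d → ℂ, MemLp f (ENNReal.ofReal q) →
      Integrable (fun z => ‖f z‖ ^ θ * heisWeight d c z) ∧
      ∫ z, ‖f z‖ ^ θ * heisWeight d c z ≤ K * Lnorm q f ^ θ := by
  obtain ⟨s, hs⟩ : ∃ s, (q / θ).HolderConjugate s :=
    ⟨_, .conjExponent ((one_lt_div hθ).mpr hθq)⟩
  have hw := memLp_heisWeight d hc hs.symm.pos
  refine ⟨(∫ z, heisWeight d c z ^ s) ^ (1 / s),
    Real.rpow_nonneg (integral_nonneg fun z => Real.rpow_nonneg (heisWeight_nonneg c z) _) _,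
    fun f hf => ⟨integrable_norm_rpow_mul hθ hs hf hw, ?_⟩⟩
  exact (integral_norm_rpow_mul_le hθ hs hf (heisWeight_nonneg c) hw).trans_eq (mul_comm _ _)

theorem exists_norm_T''op_fSharp_le {d : ℕ} {p : Fin 3 → ℝ} (hp : ∀ j, 1 < p j) {η : ℝ}
    (hη : η ≤ 1) :
    ∃ K, 0 ≤ K ∧ ∀ f₁ f₂ : H d → ℂ, MemLp f₁ (ENNReal.ofReal (p 0)) →
      MemLp f₂ (ENNReal.ofReal (p 1)) → ∀ A : Matrix (Fin (2 * d)) (Fin (2 * d)) ℝ, ∀ b : ℝ,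
      ‖T''op d A b ![fSharp η (gaussHR d p 0) f₁, fSharp η (gaussHR d p 1) f₂, gaussH d p 2]‖ ≤
        K * (|b| * opNorm (Aᵀ * Jmat d * A)) * (Lnorm (p 0) f₁ * Lnorm (p 1) f₂) ^ (3 / 4 : ℝ) := by
  have hγ (j : Fin 3) : 0 < γexp p j / 4 := div_pos (γexp_pos (hp j)) four_pos
  obtain ⟨K₀, hK₀, hf₀⟩ := exists_integral_norm_rpow_mul_heisWeight_le d (by norm_num)
    (by linarith [hp 0] : (3 / 4 : ℝ) < p 0) (hγ 0)
  obtain ⟨K₁, hK₁, hf₁⟩ := exists_integral_norm_rpow_mul_heisWeight_le d (by norm_num)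
    (by linarith [hp 1] : (3 / 4 : ℝ) < p 1) (hγ 1)
  refine ⟨K₀ * K₁, mul_nonneg hK₀ hK₁, fun f₁ f₂ h₁ h₂ A b => ?_⟩
  calc _ ≤ |b| * opNorm (Aᵀ * Jmat d * A) *
        (∫ z, ‖f₁ z‖ ^ (3 / 4 : ℝ) * heisWeight d (γexp p 0 / 4) z) *
        ∫ z, ‖f₂ z‖ ^ (3 / 4 : ℝ) * heisWeight d (γexp p 1 / 4) z :=
        norm_integral_integral_le_mul (hf₀ f₁ h₁).1 (hf₁ f₂ h₂).1
          (norm_T''_integrand_le (γexp_pos (hp 2)).le hη f₁ f₂ A b)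
    _ ≤ |b| * opNorm (Aᵀ * Jmat d * A) * (K₀ * Lnorm (p 0) f₁ ^ (3 / 4 : ℝ)) *
        (K₁ * Lnorm (p 1) f₂ ^ (3 / 4 : ℝ)) := by
        have ht := mul_nonneg (abs_nonneg b) (opNorm_nonneg (Aᵀ * Jmat d * A))
        refine mul_le_mul (mul_le_mul_of_nonneg_left (hf₀ f₁ h₁).2 ht) (hf₁ f₂ h₂).2
          (integral_nonneg fun z => ?_) (mul_nonneg ht ?_)
        · exact mul_nonneg (Real.rpow_nonneg (norm_nonneg _) _) (heisWeight_nonneg _ z)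
        · exact mul_nonneg hK₀ (Real.rpow_nonneg (Lnorm_nonneg _ _) _)
    _ = _ := by
        rw [Real.mul_rpow (Lnorm_nonneg _ _) (Lnorm_nonneg _ _)]
        ring

theorem statement14_general (d : ℕ) (p : Fin 3 → ℝ) (hp : IsAdmissible p)
    (η : ℝ) (hη : η ∈ Set.Ioo (0 : ℝ) 1) :
    ∀ ε : ℝ, 0 < ε → ∃ δ : ℝ, 0 < δ ∧
      ∀ f1 f2 : H d → ℂ, MemLp f1 (ENNReal.ofReal (p 0)) volume →
        MemLp f2 (ENNReal.ofReal (p 1)) volume →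
        Lnorm (p 0) f1 ≤ δ → Lnorm (p 1) f2 ≤ δ →
      ∀ A : Matrix (Fin (2 * d)) (Fin (2 * d)) ℝ, ∀ b : ℝ,
        opNorm (Aᵀ * Jmat d * A) ≤ δ → |b| * opNorm (Aᵀ * Jmat d * A) ≤ δ →
        ‖T''op d A b
            ![fSharp η (gaussHR d p 0) f1, fSharp η (gaussHR d p 1) f2, gaussH d p 2]‖ ≤
          ε * (Lnorm (p 0) f1 ^ 2 + Lnorm (p 1) f2 ^ 2 +
            (1 + b ^ 2) * opNorm (Aᵀ * Jmat d * A) ^ 2) := by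
  intro ε hε
  obtain ⟨K, hK, hT⟩ := exists_norm_T''op_fSharp_le (d := d) hp.1 hη.2.le
  have hκ : 0 < ε / (K + 1) := by positivity
  have hKκ : K * (ε / (K + 1)) ≤ ε := by
    rw [mul_div_assoc', div_le_iff₀ (by positivity)]
    nlinarith
  refine ⟨(ε / (K + 1)) ^ 2, by positivity, fun f₁ f₂ h₁ h₂ hn₁ hn₂ A b _ _ => ?_⟩
  set a₁ := Lnorm (p 0) f₁
  set a₂ := Lnorm (p 1) f₂
  set m := opNorm (Aᵀ * Jmat d * A)
  have hbm : (|b| * m) ^ 2 ≤ (1 + b ^ 2) * m ^ 2 := by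
    rw [mul_pow, sq_abs]
    nlinarith [sq_nonneg m]
  calc _ ≤ K * ((|b| * m) * (a₁ * a₂) ^ (3 / 4 : ℝ)) :=
        (hT f₁ f₂ h₁ h₂ A b).trans_eq (mul_assoc _ _ _)
    _ ≤ K * (ε / (K + 1) * (a₁ ^ 2 + a₂ ^ 2 + (|b| * m) ^ 2)) :=
        mul_le_mul_of_nonneg_left (mul_rpow_three_quarters_le _ hκ.le (Lnorm_nonneg _ _)
          (Lnorm_nonneg _ _) hn₁ hn₂) hK
    _ ≤ ε * (a₁ ^ 2 + a₂ ^ 2 + (1 + b ^ 2) * m ^ 2) := by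
        rw [← mul_assoc]
        exact mul_le_mul hKκ (by linarith) (by positivity) hε.le

/-- `T''` with two sharp perturbations. -/
theorem statement14 (d : ℕ) (hd : 1 ≤ d) (p : Fin 3 → ℝ) (hp : IsAdmissible p)
    (η : ℝ) (hη : η ∈ Set.Ioo (0 : ℝ) 1) :
    ∀ ε : ℝ, 0 < ε → ∃ δ : ℝ, 0 < δ ∧
      ∀ f1 f2 : H d → ℂ, MemLp f1 (ENNReal.ofReal (p 0)) volume →
        MemLp f2 (ENNReal.ofReal (p 1)) volume →
        Lnorm (p 0) f1 ≤ δ → Lnorm (p 1) f2 ≤ δ →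
      ∀ A : Matrix (Fin (2 * d)) (Fin (2 * d)) ℝ, ∀ b : ℝ,
        opNorm (Aᵀ * Jmat d * A) ≤ δ → |b| * opNorm (Aᵀ * Jmat d * A) ≤ δ →
        ‖T''op d A b
            ![fSharp η (gaussHR d p 0) f1, fSharp η (gaussHR d p 1) f2, gaussH d p 2]‖ ≤
          ε * (Lnorm (p 0) f1 ^ 2 + Lnorm (p 1) f2 ^ 2 +
            (1 + b ^ 2) * opNorm (Aᵀ * Jmat d * A) ^ 2) :=
  statement14_general d p hp η hη

end Stability
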